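/- arXiv:2408.17198 — 4 statements merged into one kernel-verified Lean document; each statement's English description precedes it below -/
import Mathlib

section
/- Let ι be a finite set of feature indices with full feature set N = ι, let g : Finset ι → ℝ be a set function, and let μ(L) = ∑_{S ⊆ L} (-1)^{|L|-|S|} g(S) be its Harsanyi dividends. Then for any two distinct features I, J ∈ ι, the relevance of the conjunction I ∧ J, defined as the sum of Harsanyi dividends over all subsets containing both features, satisfies ∑_{L ⊆ N, I ∈ L and J ∈ L} μ(L) = g(N) − g(N \ {I}) − g(N \ {J}) + g(N \ {I, J}). -/
/-!
Summing the dividends over the subsets of `T` gives back `g T` (Möbius inversion on the Boolean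
lattice). Conversely, by inclusion–exclusion the indicator of `A ⊆ L` is
`∑ B ⊆ A \ L, (-1) ^ #B`, so the dividends of the supersets `L` of `A` add up to
`∑ B ⊆ A, (-1) ^ #B * g (N \ B)`; for `A = {I, J}` these are the four terms on the right.
-/

open Finset

section

variable {α R : Type*} [DecidableEq α] [Ring R]

theorem sum_powerset_neg_one_pow_card_eq_ite (s : Finset α) :
    ∑ t ∈ s.powerset, (-1 : R) ^ #t = if s = ∅ then 1 else 0 := by
  simpa using congrArg (Int.cast : ℤ → R) (sum_powerset_neg_one_pow_card (x := s))

theorem sum_Icc_neg_one_pow_card_sdiff {s t : Finset α} (h : s ⊆ t) :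
    ∑ u ∈ Icc s t, (-1 : R) ^ #(u \ s) = if s = t then 1 else 0 := by
  have hsum : ∑ u ∈ Icc s t, (-1 : R) ^ #(u \ s) = ∑ v ∈ (t \ s).powerset, (-1 : R) ^ #v :=
    sum_nbij' (· \ s) (s ∪ ·) (fun u hu => by simp_all [sdiff_subset_sdiff])
      (fun v hv => mem_Icc.2
        ⟨subset_union_left, union_subset h (subset_sdiff.1 (mem_powerset.1 hv)).1⟩)
      (fun u hu => union_sdiff_of_subset (mem_Icc.1 hu).1)
      (fun v hv => by
        rw [union_sdiff_left, sdiff_eq_self_of_disjoint (subset_sdiff.1 (mem_powerset.1 hv)).2])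
      (fun _ _ => rfl)
  simp only [hsum, sum_powerset_neg_one_pow_card_eq_ite, sdiff_eq_empty_iff_subset,
    Subset.antisymm_iff (s₁ := s), h, true_and]

theorem sum_powerset_harsanyi_dividend {g μ : Finset α → R}
    (hμ : ∀ L, μ L = ∑ S ∈ L.powerset, (-1 : R) ^ (#L - #S) * g S) (T : Finset α) :
    ∑ L ∈ T.powerset, μ L = g T := by
  calc ∑ L ∈ T.powerset, μ L
      = ∑ L ∈ T.powerset, ∑ S ∈ L.powerset, (-1 : R) ^ #(L \ S) * g S :=
        sum_congr rfl fun L _ => (hμ L).trans <| sum_congr rfl fun S hS => by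
          rw [card_sdiff_of_subset (mem_powerset.1 hS)]
    _ = ∑ S ∈ T.powerset, (∑ L ∈ Icc S T, (-1 : R) ^ #(L \ S)) * g S := by
        simp_rw [sum_mul]
        exact sum_comm' fun L S => by simp only [mem_powerset, mem_Icc]; grind
    _ = g T := by
        rw [sum_congr rfl fun S hS => by rw [sum_Icc_neg_one_pow_card_sdiff (mem_powerset.1 hS)]]
        simp

theorem sum_filter_superset_eq_sum_powerset (f : Finset α → R) (A T : Finset α) :
    ∑ L ∈ T.powerset with A ⊆ L, f L
      = ∑ B ∈ A.powerset, (-1 : R) ^ #B * ∑ L ∈ (T \ B).powerset, f L := by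
  calc ∑ L ∈ T.powerset with A ⊆ L, f L
      = ∑ L ∈ T.powerset, (∑ B ∈ (A \ L).powerset, (-1 : R) ^ #B) * f L := by
        rw [sum_filter]
        simp only [sum_powerset_neg_one_pow_card_eq_ite, sdiff_eq_empty_iff_subset, ite_mul,
          one_mul, zero_mul]
    _ = ∑ B ∈ A.powerset, (-1 : R) ^ #B * ∑ L ∈ (T \ B).powerset, f L := by
        simp_rw [sum_mul, mul_sum]
        exact sum_comm' fun L B => by
          simp only [mem_powerset, subset_sdiff, disjoint_comm (a := B)]; tauto

end

/-- The relevance of the conjunction `I ∧ J` (sum of Harsanyi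
dividends over all subsets containing both features) equals
`g(N) − g(N \ {I}) − g(N \ {J}) + g(N \ {I, J})`. -/
theorem conjunction_relevance_eq
    {ι : Type*} [Fintype ι] [DecidableEq ι]
    (g μ : Finset ι → ℝ)
    (hμ : ∀ L : Finset ι,
      μ L = ∑ S ∈ L.powerset, (-1 : ℝ) ^ (L.card - S.card) * g S)
    (I J : ι) (hIJ : I ≠ J) :
    ∑ L ∈ Finset.univ.filter (fun L : Finset ι => I ∈ L ∧ J ∈ L), μ L
      = g Finset.univ - g (Finset.univ \ {I}) - g (Finset.univ \ {J})
        + g (Finset.univ \ {I, J}) := by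
  have hfilter : ∀ L : Finset ι, (I ∈ L ∧ J ∈ L) ↔ {I, J} ⊆ L := fun L => by
    rw [insert_subset_iff, singleton_subset_iff]
  have hI : I ∉ ({J} : Finset ι) := by simpa using hIJ
  simp_rw [hfilter, ← powerset_univ, sum_filter_superset_eq_sum_powerset,
    sum_powerset_harsanyi_dividend hμ, sum_powerset_insert hI, ← insert_empty_eq J,
    sum_powerset_insert (notMem_empty J)]
  simp only [powerset_empty, sum_singleton, card_empty, pow_zero, sdiff_empty, one_mul,
    insert_empty_eq, card_singleton, pow_one, neg_mul, card_insert_of_notMem hI, Nat.reduceAdd,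
    even_two, Even.neg_pow, one_pow]
  ring
end

section
/- Let ι be a finite set of feature indices with full set N = ι, g : Finset ι → ℝ a set function, and μ its Harsanyi dividends μ(L) = ∑_{S ⊆ L} (-1)^{|L|-|S|} g(S). Define the occlusion relevance of a set of features by A(S) = g(N) − g(N \ S), and the conjunction relevance A(I ∧ J) = ∑_{L ⊆ N, I ∈ L and J ∈ L} μ(L). Then for distinct I, J ∈ ι the inclusion–exclusion principle holds: A(I ∧ J) = A({I}) + A({J}) − A({I, J}). -/
open Finset

private lemma real_sum_powerset_neg_one_pow_card {α : Type*} [DecidableEq α] {x : Finset α} :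
    (∑ m ∈ x.powerset, (-1 : ℝ) ^ m.card) = if x = ∅ then 1 else 0 := by
  have h := Finset.sum_powerset_neg_one_pow_card (x := x)
  have := congrArg (fun z : ℤ => (z : ℝ)) h
  push_cast at this
  simpa using this

private lemma inner_indicator {ι : Type*} [DecidableEq ι] (T S : Finset ι) (hS : S ⊆ T) :
    ∑ L ∈ T.powerset.filter (fun L => S ⊆ L), (-1 : ℝ) ^ (L.card - S.card)
      = if S = T then 1 else 0 := by
  have hbij : ∑ L ∈ T.powerset.filter (fun L => S ⊆ L), (-1 : ℝ) ^ (L.card - S.card)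
      = ∑ M ∈ (T \ S).powerset, (-1 : ℝ) ^ M.card := by
    apply Finset.sum_nbij' (fun L => L \ S) (fun M => S ∪ M)
    · intro L hL
      simp only [mem_filter, mem_powerset] at hL
      simpa [mem_powerset] using Finset.sdiff_subset_sdiff hL.1 (le_refl S)
    · intro M hM
      simp only [mem_powerset] at hM
      simp only [mem_filter, mem_powerset]
      constructor
      · exact Finset.union_subset hS (hM.trans (Finset.sdiff_subset))
      · exact Finset.subset_union_left
    · intro L hL
      simp only [mem_filter, mem_powerset] at hL
      exact Finset.union_sdiff_of_subset hL.2
    · intro M hM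
      simp only [mem_powerset] at hM
      have : Disjoint S M := Finset.disjoint_of_subset_right hM Finset.disjoint_sdiff
      rw [Finset.union_sdiff_cancel_left this]
    · intro L hL
      simp only [mem_filter, mem_powerset] at hL
      rw [Finset.card_sdiff_of_subset hL.2]
  rw [hbij, real_sum_powerset_neg_one_pow_card]
  congr 1
  simp only [Finset.sdiff_eq_empty_iff_subset, eq_iff_iff]
  constructor
  · intro h; exact Finset.Subset.antisymm hS h
  · intro h; rw [h]

private lemma mobius_inv {ι : Type*} [DecidableEq ι] (g μ : Finset ι → ℝ)
    (hμ : ∀ L : Finset ι,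
      μ L = ∑ S ∈ L.powerset, (-1 : ℝ) ^ (L.card - S.card) * g S)
    (T : Finset ι) :
    ∑ L ∈ T.powerset, μ L = g T := by
  calc ∑ L ∈ T.powerset, μ L
      = ∑ L ∈ T.powerset, ∑ S ∈ T.powerset,
          if S ⊆ L then (-1 : ℝ) ^ (L.card - S.card) * g S else 0 := by
        refine Finset.sum_congr rfl fun L hL => ?_
        rw [hμ L, ← Finset.sum_filter]
        rw [mem_powerset] at hL
        congr 1
        ext S
        simp only [Finset.mem_filter, mem_powerset]
        constructor
        · intro h; exact ⟨h.trans hL, h⟩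
        · intro h; exact h.2
    _ = ∑ S ∈ T.powerset, ∑ L ∈ T.powerset,
          if S ⊆ L then (-1 : ℝ) ^ (L.card - S.card) * g S else 0 := Finset.sum_comm
    _ = ∑ S ∈ T.powerset, (if S = T then 1 else 0) * g S := by
        refine Finset.sum_congr rfl fun S hS => ?_
        rw [mem_powerset] at hS
        rw [← inner_indicator T S hS, Finset.sum_filter, Finset.sum_mul]
        refine Finset.sum_congr rfl fun L _ => ?_
        split <;> simp
    _ = g T := by
        simp only [ite_mul, one_mul, zero_mul]
        rw [Finset.sum_ite_eq' T.powerset T g]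
        simp

/-- The inclusion–exclusion principle for the conjunction relevance:
`A(I ∧ J) = A({I}) + A({J}) − A({I, J})` where `A S = g(N) − g(N \ S)` is the
occlusion relevance and `A(I ∧ J)` is the sum of Harsanyi dividends over all
subsets containing both `I` and `J`. -/
theorem inclusion_exclusion_principle
    {ι : Type*} [Fintype ι] [DecidableEq ι]
    (g μ : Finset ι → ℝ)
    (hμ : ∀ L : Finset ι,
      μ L = ∑ S ∈ L.powerset, (-1 : ℝ) ^ (L.card - S.card) * g S)
    (A : Finset ι → ℝ)
    (hA : ∀ S : Finset ι, A S = g Finset.univ - g (Finset.univ \ S))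
    (I J : ι) (hIJ : I ≠ J)
    (Awedge : ℝ)
    (hAw : Awedge
      = ∑ L ∈ Finset.univ.filter (fun L : Finset ι => I ∈ L ∧ J ∈ L), μ L) :
    Awedge = A {I} + A {J} - A {I, J} := by
  have hpow : ∀ T : Finset ι, T.powerset = Finset.univ.filter (fun L => L ⊆ T) := by
    intro T; ext L; simp [Finset.mem_powerset]
  have h1 : g (Finset.univ : Finset ι) = ∑ L : Finset ι, μ L := by
    rw [← mobius_inv g μ hμ Finset.univ, Finset.powerset_univ]
  have h2 : g (Finset.univ \ {I}) = ∑ L ∈ Finset.univ.filter (fun L : Finset ι => I ∉ L), μ L := by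
    rw [← mobius_inv g μ hμ (Finset.univ \ {I}), hpow]
    congr 1; ext L
    simp [Finset.subset_sdiff, Finset.disjoint_singleton_right]
  have h3 : g (Finset.univ \ {J}) = ∑ L ∈ Finset.univ.filter (fun L : Finset ι => J ∉ L), μ L := by
    rw [← mobius_inv g μ hμ (Finset.univ \ {J}), hpow]
    congr 1; ext L
    simp [Finset.subset_sdiff, Finset.disjoint_singleton_right]
  have h4 : g (Finset.univ \ {I, J}) = ∑ L ∈ Finset.univ.filter (fun L : Finset ι => I ∉ L ∧ J ∉ L), μ L := by
    rw [← mobius_inv g μ hμ (Finset.univ \ {I, J}), hpow]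
    congr 1; ext L
    simp [Finset.subset_sdiff, Finset.disjoint_insert_right, Finset.disjoint_singleton_right]
  have key : ∑ L ∈ Finset.univ.filter (fun L : Finset ι => I ∈ L ∧ J ∈ L), μ L
      = (∑ L : Finset ι, μ L)
        - (∑ L ∈ Finset.univ.filter (fun L : Finset ι => I ∉ L), μ L)
        - (∑ L ∈ Finset.univ.filter (fun L : Finset ι => J ∉ L), μ L)
        + (∑ L ∈ Finset.univ.filter (fun L : Finset ι => I ∉ L ∧ J ∉ L), μ L) := by
    rw [Finset.sum_filter, Finset.sum_filter, Finset.sum_filter, Finset.sum_filter,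
      ← Finset.sum_sub_distrib, ← Finset.sum_sub_distrib, ← Finset.sum_add_distrib]
    refine Finset.sum_congr rfl fun L _ => ?_
    by_cases hI : I ∈ L <;> by_cases hJ : J ∈ L <;> simp [hI, hJ]
  rw [hAw, key, hA, hA, hA, ← h1, ← h2, ← h3, ← h4]
  ring
end

section
/- Let ι be a finite set of feature indices with |ι| = n ≥ 1, g : Finset ι → ℝ a set function, and μ its Harsanyi dividends μ(L) = ∑_{S ⊆ L} (-1)^{|L|-|S|} g(S). Then for every feature I ∈ ι, the query relevance of the presence of I with weight vector η(L) = 1/|L| coincides with the Shapley value of I: ∑_{L ⊆ ι, I ∈ L} μ(L)/|L| = ∑_{S ⊆ ι \ {I}} (|S|! · (n − 1 − |S|)! / n!) · (g(S ∪ {I}) − g(S)). -/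
/-!
Splitting off `I`, the dividend of `insert I K` (with `I ∉ K`) is the alternating sum
`∑_{T ⊆ K} (-1)^{|K|-|T|} (g (T ∪ {I}) - g T)`. After exchanging the two sums, the
marginal contribution of `T ⊆ U = ι \ {I}` carries the weight
`∑_{T ⊆ K ⊆ U} (-1)^{|K|-|T|} / (|K| + 1)`, which up to the sign `(-1)^m`, `m = |U| - |T|`,
is the `m`-th forward difference of `x ↦ 1 / (x + 1)` at `|T|`. That difference is
`(-1)^m |T|! m! / (|T| + m + 1)!` (a Beta integral), exactly the Shapley weight.
-/

open Finset Nat fwdDiff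

theorem fwdDiff_iter_inv_natCast_add_one (m t : ℕ) :
    (Δ_[1])^[m] (fun x : ℕ => ((x : ℝ) + 1)⁻¹) t = (-1) ^ m * t ! * m ! / (t + m + 1)! := by
  induction m generalizing t with
  | zero =>
    simp [Nat.factorial_succ]
    field_simp
  | succ m ih =>
    rw [Function.iterate_succ_apply', fwdDiff, ih, ih, show t + 1 + m + 1 = t + (m + 1) + 1 by ring]
    have hm : ((m + 1)! : ℝ) = (m + 1) * m ! := by push_cast [Nat.factorial_succ]; ring
    have ht : ((t + 1)! : ℝ) = (t + 1) * t ! := by push_cast [Nat.factorial_succ]; ring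
    have hs : ((t + (m + 1) + 1)! : ℝ) = (t + m + 2) * (t + m + 1)! := by
      rw [show t + (m + 1) + 1 = (t + m + 1) + 1 by ring, Nat.factorial_succ]; push_cast; ring
    rw [hm, ht, hs]
    field_simp
    ring

theorem sum_range_neg_one_pow_mul_choose_div (m t : ℕ) :
    ∑ k ∈ range (m + 1), (-1 : ℝ) ^ k * m.choose k / (t + k + 1) = t ! * m ! / (t + m + 1)! := by
  have h := fwdDiff_iter_inv_natCast_add_one m t
  rw [fwdDiff_iter_eq_sum_shift] at h
  calc _ = (-1) ^ m * ∑ k ∈ range (m + 1),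
          ((-1 : ℤ) ^ (m - k) * m.choose k) • ((t + k : ℕ) + 1 : ℝ)⁻¹ := by
        rw [mul_sum]
        refine sum_congr rfl fun k hk => ?_
        have hsign : (-1 : ℝ) ^ m * (-1) ^ (m - k) = (-1) ^ k := by
          have hkm := Nat.lt_succ_iff.mp (mem_range.mp hk)
          rw [← pow_add, show m + (m - k) = k + 2 * (m - k) by omega, pow_add, pow_mul]
          norm_num
        rw [zsmul_eq_mul, ← hsign]
        push_cast
        ring
    _ = _ := by
        simp only [smul_eq_mul, mul_one] at h
        rw [h, mul_div_assoc, mul_assoc, ← mul_assoc, ← pow_add, ← two_mul, pow_mul]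
        norm_num
        ring

section

variable {α : Type*} [DecidableEq α]

def harsanyiDividend (g : Finset α → ℝ) (L : Finset α) : ℝ :=
  ∑ S ∈ L.powerset, (-1 : ℝ) ^ (L.card - S.card) * g S

theorem harsanyiDividend_insert (g : Finset α → ℝ) {a : α} {K : Finset α} (ha : a ∉ K) :
    harsanyiDividend g (insert a K) =
      ∑ T ∈ K.powerset, (-1 : ℝ) ^ (K.card - T.card) * (g (insert a T) - g T) := by
  rw [harsanyiDividend, sum_powerset_insert ha, add_comm, ← sum_add_distrib]
  refine sum_congr rfl fun T hT => ?_
  have hTK : T.card ≤ K.card := card_le_card (mem_powerset.mp hT)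
  have haT : a ∉ T := fun h => ha (mem_powerset.mp hT h)
  rw [card_insert_of_notMem ha, card_insert_of_notMem haT, Nat.add_sub_add_right,
    Nat.succ_sub hTK, pow_succ]
  ring

theorem sum_Icc_neg_one_pow_div_card_add_one {T U : Finset α} (h : T ⊆ U) :
    ∑ K ∈ Icc T U, (-1 : ℝ) ^ (K.card - T.card) / (K.card + 1) =
      T.card ! * (U.card - T.card)! / (U.card + 1)! := by
  have hdisj : ∀ J ∈ (U \ T).powerset, Disjoint T J := fun J hJ =>
    disjoint_of_subset_right (mem_powerset.mp hJ) disjoint_sdiff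
  have hinj : Set.InjOn (T ∪ ·) (U \ T).powerset := fun J hJ J' hJ' hJJ' => by
    simpa [union_sdiff_cancel_left (hdisj J hJ), union_sdiff_cancel_left (hdisj J' hJ')]
      using congrArg (· \ T) hJJ'
  rw [Icc_eq_image_powerset h, sum_image hinj]
  calc _ = ∑ J ∈ (U \ T).powerset, (-1 : ℝ) ^ J.card / (T.card + J.card + 1) := by
        refine sum_congr rfl fun J hJ => ?_
        rw [card_union_of_disjoint (hdisj J hJ), Nat.add_sub_cancel_left]
        push_cast; rfl
    _ = _ := by
        have key := sum_range_neg_one_pow_mul_choose_div (U.card - T.card) T.card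
        rw [Nat.add_sub_cancel' (card_le_card h)] at key
        rw [sum_powerset_apply_card (fun k => (-1 : ℝ) ^ k / (T.card + k + 1)),
          card_sdiff_of_subset h, ← key]
        refine sum_congr rfl fun k _ => ?_
        rw [nsmul_eq_mul]
        ring

theorem sum_filter_mem_eq_sum_powerset_insert {M : Type*} [AddCommMonoid M] [Fintype α]
    (a : α) (f : Finset α → M) :
    ∑ L ∈ univ.filter (a ∈ ·), f L = ∑ K ∈ (univ \ {a}).powerset, f (insert a K) := by
  symm
  refine sum_nbij' (insert a) (erase · a) ?_ ?_ ?_ ?_ (fun _ _ => rfl)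
  all_goals intro K hK; simp only [mem_filter, mem_univ, true_and, mem_powerset] at hK ⊢
  all_goals grind

theorem sum_powerset_harsanyiDividend_insert_div (g : Finset α → ℝ) {a : α} {U : Finset α}
    (ha : a ∉ U) :
    ∑ K ∈ U.powerset, harsanyiDividend g (insert a K) / (insert a K).card =
      ∑ T ∈ U.powerset,
        (T.card ! * (U.card - T.card)! / (U.card + 1)! : ℝ) * (g (insert a T) - g T) := by
  calc _ = ∑ K ∈ U.powerset, ∑ T ∈ K.powerset,
          (-1 : ℝ) ^ (K.card - T.card) / (K.card + 1) * (g (insert a T) - g T) := by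
        refine sum_congr rfl fun K hK => ?_
        have haK : a ∉ K := fun h => ha (mem_powerset.mp hK h)
        rw [harsanyiDividend_insert g haK, card_insert_of_notMem haK, sum_div]
        push_cast
        exact sum_congr rfl fun T _ => by ring
    _ = ∑ T ∈ U.powerset, ∑ K ∈ Icc T U,
          (-1 : ℝ) ^ (K.card - T.card) / (K.card + 1) * (g (insert a T) - g T) :=
        sum_comm' fun K T => by
          simp only [mem_powerset, mem_Icc]
          exact ⟨fun ⟨hKU, hTK⟩ => ⟨⟨hTK, hKU⟩, hTK.trans hKU⟩, fun ⟨⟨hTK, hKU⟩, _⟩ => ⟨hKU, hTK⟩⟩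
    _ = _ := sum_congr rfl fun T hT => by
        rw [← sum_mul, sum_Icc_neg_one_pow_div_card_add_one (mem_powerset.mp hT)]

end

theorem presence_relevance_eq_shapley_value_general
    {ι : Type*} [Fintype ι] [DecidableEq ι]
    (n : ℕ) (hcard : Fintype.card ι = n)
    (g μ : Finset ι → ℝ)
    (hμ : ∀ L : Finset ι,
      μ L = ∑ S ∈ L.powerset, (-1 : ℝ) ^ (L.card - S.card) * g S)
    (I : ι) :
    ∑ L ∈ Finset.univ.filter (fun L : Finset ι => I ∈ L), μ L / (L.card : ℝ)
      = ∑ S ∈ (Finset.univ \ {I} : Finset ι).powerset,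
          ((S.card.factorial : ℝ) * ((n - 1 - S.card).factorial : ℝ)
              / (n.factorial : ℝ))
            * (g (S ∪ {I}) - g S) := by
  have hμg : μ = harsanyiDividend g := funext hμ
  have hcardU : (univ \ {I}).card = n - 1 := by
    rw [card_sdiff_of_subset (subset_univ _), Finset.card_univ, card_singleton, hcard]
  have hn_pred_succ : n - 1 + 1 = n := by
    have : 0 < n := hcard ▸ Fintype.card_pos_iff.mpr ⟨I⟩
    omega
  rw [hμg, sum_filter_mem_eq_sum_powerset_insert I (fun L => harsanyiDividend g L / L.card),
    sum_powerset_harsanyiDividend_insert_div g (notMem_sdiff_of_mem_right (mem_singleton_self I))]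
  refine sum_congr rfl fun S _ => ?_
  rw [hcardU, hn_pred_succ, union_singleton]

/-- The query relevance of the presence of feature `I` with
weight vector `η L = 1/|L|` coincides with the Shapley value of `I` for the
game `g`. -/
theorem presence_relevance_eq_shapley_value
    {ι : Type*} [Fintype ι] [DecidableEq ι]
    (n : ℕ) (hn : 1 ≤ n) (hcard : Fintype.card ι = n)
    (g μ : Finset ι → ℝ)
    (hμ : ∀ L : Finset ι,
      μ L = ∑ S ∈ L.powerset, (-1 : ℝ) ^ (L.card - S.card) * g S)
    (I : ι) :
    ∑ L ∈ Finset.univ.filter (fun L : Finset ι => I ∈ L), μ L / (L.card : ℝ)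
      = ∑ S ∈ (Finset.univ \ {I} : Finset ι).powerset,
          ((S.card.factorial : ℝ) * ((n - 1 - S.card).factorial : ℝ)
              / (n.factorial : ℝ))
            * (g (S ∪ {I}) - g S) :=
  presence_relevance_eq_shapley_value_general n hcard g μ hμ I
end

section
/- Let ι be a finite set of token indices, E a real vector space, and consider a multi-linear model given by initial token embeddings H₀ : ι → E, linear block maps V_t(J, K) : E →ₗ[ℝ] E for t = 1, …, T and J, K ∈ ι, with forward propagation H_t(K) = ∑_{J ∈ ι} V_t(J, K)(H_{t−1}(J)), and a linear output ĝ(L) : E →ₗ[ℝ] ℝ for each L ∈ ι, so that the model output is f = ∑_{L ∈ ι} ĝ(L)(H_T(L)). For a walk W = (I₀, I₁, …, I_T) ∈ ι^{T+1}, define its higher-order relevance R_W = ĝ(I_T)( V_T(I_{T−1}, I_T)( ⋯ V_1(I₀, I₁)(H₀(I₀)) ⋯ ) ). Then the walk relevances are conservative: the sum of R_W over all walks W ∈ ι^{T+1} equals the model output f. -/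
/-!
Unrolling the forward recursion shows that `H t K` is the sum of the chain values of all walks
`(I₀, …, I_t)` with `I_t = K`: each step splits a walk into its last token and the walk before
it, and `V t J K` commutes with the finite sum. Since the readout is
linear, summing `gout L` over these sums for every final token `L` gives the model output.
-/

/-- The value carried along a walk `W` through the multi-linear model: start at
the initial embedding of `W 0` and apply, at each block `t`, the linear map
aggregating token `W t` into token `W (t+1)`. -/
def chainVal {ι : Type*} {E : Type*} [AddCommGroup E] [Module ℝ E]
    (V : ℕ → ι → ι → (E →ₗ[ℝ] E)) (H0 : ι → E) (W : ℕ → ι) : ℕ → E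
  | 0 => H0 (W 0)
  | t + 1 => V t (W t) (W (t + 1)) (chainVal V H0 W t)

theorem Fin.sum_pi_eq_sum_sum_snoc {ι M : Type*} [Fintype ι] [AddCommMonoid M] {n : ℕ}
    (φ : (Fin (n + 1) → ι) → M) :
    ∑ W, φ W = ∑ K, ∑ W : Fin n → ι, φ (Fin.snoc W K) := by
  rw [← (Fin.snocEquiv fun _ => ι).sum_comp, Fintype.sum_prod_type]
  rfl

theorem Fin.ofNat_eq_last (n : ℕ) : Fin.ofNat (n + 1) n = Fin.last n := by
  ext; simp

theorem Fin.snoc_ofNat_of_lt {α : Type*} {n k : ℕ} (W : Fin (n + 1) → α) (K : α)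
    (h : k < n + 1) :
    (Fin.snoc W K : Fin (n + 2) → α) (Fin.ofNat (n + 2) k) = W (Fin.ofNat (n + 1) k) := by
  have : Fin.ofNat (n + 2) k = (Fin.ofNat (n + 1) k).castSucc := by
    ext; simp [Nat.mod_eq_of_lt h, Nat.mod_eq_of_lt (h.trans n.succ.lt_succ_self)]
  rw [this, Fin.snoc_castSucc]

section

variable {ι E : Type*} [AddCommGroup E] [Module ℝ E]
  (V : ℕ → ι → ι → (E →ₗ[ℝ] E)) (H0 : ι → E)

theorem chainVal_congr {W W' : ℕ → ι} {t : ℕ} (h : ∀ n ≤ t, W n = W' n) :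
    chainVal V H0 W t = chainVal V H0 W' t := by
  induction t with
  | zero => simp only [chainVal, h 0 le_rfl]
  | succ t ih =>
    simp only [chainVal, h t t.le_succ, h (t + 1) le_rfl, ih fun n hn => h n (hn.trans t.le_succ)]

theorem chainVal_snoc {t : ℕ} (W : Fin (t + 1) → ι) (K : ι) :
    chainVal V H0 (fun n => (Fin.snoc W K : Fin (t + 2) → ι) (Fin.ofNat (t + 2) n)) (t + 1)
      = V t (W (Fin.last t)) K (chainVal V H0 (fun n => W (Fin.ofNat (t + 1) n)) t) := by
  rw [chainVal, chainVal_congr V H0 fun n hn => Fin.snoc_ofNat_of_lt W K (Nat.lt_succ_of_le hn),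
    Fin.snoc_ofNat_of_lt W K t.lt_succ_self, Fin.ofNat_eq_last, Fin.ofNat_eq_last, Fin.snoc_last]

variable [Fintype ι] (H : ℕ → ι → E)

theorem sum_chainVal_snoc_eq (hH0 : H 0 = H0)
    (hH : ∀ (t : ℕ) (K : ι), H (t + 1) K = ∑ J : ι, V t J K (H t J)) (t : ℕ) (K : ι) :
    ∑ W : Fin t → ι,
        chainVal V H0 (fun n => (Fin.snoc W K : Fin (t + 1) → ι) (Fin.ofNat (t + 1) n)) t
      = H t K := by
  induction t generalizing K with
  | zero => simp [chainVal, hH0, Fin.snoc]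
  | succ t ih =>
    simp_rw [chainVal_snoc, Fin.sum_pi_eq_sum_sum_snoc, Fin.snoc_last, ← map_sum, ih, hH]

end

theorem walk_relevances_conservative_general
    {ι : Type*} [Fintype ι]
    {E : Type*} [AddCommGroup E] [Module ℝ E]
    (T : ℕ)
    (V : ℕ → ι → ι → (E →ₗ[ℝ] E))
    (H0 : ι → E) (gout : ι → (E →ₗ[ℝ] ℝ))
    (H : ℕ → ι → E)
    (hH0 : H 0 = H0)
    (hH : ∀ (t : ℕ) (K : ι), H (t + 1) K = ∑ J : ι, V t J K (H t J))
    (f : ℝ)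
    (hf : f = ∑ L : ι, gout L (H T L)) :
    ∑ W : Fin (T + 1) → ι,
        gout (W (Fin.last T)) (chainVal V H0 (fun n : ℕ => W (Fin.ofNat (T + 1) n)) T)
      = f := by
  simp_rw [hf, Fin.sum_pi_eq_sum_sum_snoc, Fin.snoc_last, ← map_sum,
    sum_chainVal_snoc_eq V H0 H hH0 hH]

/-- In a multi-linear model with forward propagation
`H (t+1) K = ∑ J, V t J K (H t J)` and linear readout
`f = ∑ L, gout L (H T L)`, the higher-order walk relevances
`R_W = gout (W T) (V_{T-1} ⋯ V_0 (H0 (W 0)))` are conservative: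
their sum over all walks `W ∈ ι^{T+1}` equals the model output `f`. -/
theorem walk_relevances_conservative
    {ι : Type*} [Fintype ι] [DecidableEq ι]
    {E : Type*} [AddCommGroup E] [Module ℝ E]
    (T : ℕ)
    (V : ℕ → ι → ι → (E →ₗ[ℝ] E))
    (H0 : ι → E) (gout : ι → (E →ₗ[ℝ] ℝ))
    (H : ℕ → ι → E)
    (hH0 : H 0 = H0)
    (hH : ∀ (t : ℕ) (K : ι), H (t + 1) K = ∑ J : ι, V t J K (H t J))
    (f : ℝ)
    (hf : f = ∑ L : ι, gout L (H T L)) :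
    ∑ W : Fin (T + 1) → ι,
        gout (W (Fin.last T)) (chainVal V H0 (fun n : ℕ => W (Fin.ofNat (T + 1) n)) T)
      = f :=
  walk_relevances_conservative_general T V H0 gout H hH0 hH f hf
end
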